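/- Let σ : ℝ → ℝ be Lipschitz with constant τ_σ ≥ 0, applied to matrices entrywise. Let L_i, L_j ∈ ℝ^{n×n} be the (normalized) Laplacian matrices of two k-hop subgraphs on n nodes, and define the 1-hop graph filters Ψ(L_i) = I − L_i and Ψ(L_j) = I − L_j. Fix K ≥ 1, weight matrices W¹,…,W^K ∈ ℝ^{d×d}, and a common all-ones initial attribute matrix H⁰ ∈ ℝ^{n×d} (all entries equal to 1). Define recursively H_i^l = σ(Ψ(L_i) H_i^{l−1} W^l) and H_j^l = σ(Ψ(L_j) H_j^{l−1} W^l) for l = 1,…,K, with H_i^0 = H_j^0 = H⁰, and let the pooled center-node representations be H_i^role = (1/n) ∑_{v=1}^{n} (row v of H_i^K) ∈ ℝ^d and H_j^role = (1/n) ∑_{v=1}^{n} (row v of H_j^K) ∈ ℝ^d. Suppose τ_w, τ_h, τ_l ≥ 0 satisfy ‖W^l‖₂ ≤ τ_w for all l, ‖H_i^l‖_F ≤ τ_h for all 0 ≤ l ≤ K−1, and ‖Ψ(L_j)‖₂ ≤ τ_l, and suppose b = τ_σ·τ_w·τ_l ≠ 1. Then ‖H_i^role − H_j^role‖₂ ≤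 τ · ‖L_i − L_j‖₂, where τ = ((b^K − 1)/(b − 1)) · τ_σ·τ_w·τ_h. -/
import Mathlib
open scoped Matrix.Norms.L2Operator
open Matrix

/-- The ℓ2 operator norm (spectral norm) of a real matrix, i.e. the operator norm of
the induced linear map between Euclidean spaces. -/
noncomputable def matOpNorm {n d : ℕ} (A : Matrix (Fin n) (Fin d) ℝ) : ℝ :=
  ‖LinearMap.toContinuousLinearMap (Matrix.toEuclideanLin A)‖

/-- The Frobenius norm of a real matrix: the square root of the sum of squares of its
entries. -/
noncomputable def frobNorm {n d : ℕ} (A : Matrix (Fin n) (Fin d) ℝ) : ℝ :=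
  Real.sqrt (∑ i, ∑ j, (A i j) ^ 2)

/-- The Euclidean (ℓ2) norm of a vector in ℝ^d. -/
noncomputable def vecNorm {d : ℕ} (v : Fin d → ℝ) : ℝ :=
  Real.sqrt (∑ j, (v j) ^ 2)

/-- Mean pooling of a matrix `H ∈ ℝ^{n×d}`: the average of its rows, a vector in ℝ^d. -/
noncomputable def meanPool {n d : ℕ} (H : Matrix (Fin n) (Fin d) ℝ) : Fin d → ℝ :=
  fun c => (1 / (n : ℝ)) * ∑ v, H v c

namespace GCNAux

lemma matOpNorm_eq {n d : ℕ} (A : Matrix (Fin n) (Fin d) ℝ) : matOpNorm A = ‖A‖ := rfl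

lemma matOpNorm_nonneg {n d : ℕ} (A : Matrix (Fin n) (Fin d) ℝ) : 0 ≤ matOpNorm A :=
  norm_nonneg _

lemma vecNorm_eq {d : ℕ} (v : Fin d → ℝ) :
    vecNorm v = ‖(WithLp.equiv 2 (Fin d → ℝ)).symm v‖ := by
  rw [vecNorm, EuclideanSpace.norm_eq]; simp [sq_abs]

lemma vecNorm_nonneg {d : ℕ} (v : Fin d → ℝ) : 0 ≤ vecNorm v := Real.sqrt_nonneg _

lemma frobNorm_nonneg {n d : ℕ} (A : Matrix (Fin n) (Fin d) ℝ) : 0 ≤ frobNorm A :=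
  Real.sqrt_nonneg _

lemma vecNorm_sq {d : ℕ} (v : Fin d → ℝ) : vecNorm v ^ 2 = ∑ j, (v j) ^ 2 :=
  Real.sq_sqrt (Finset.sum_nonneg fun _ _ => sq_nonneg _)

lemma frobNorm_sq {n d : ℕ} (A : Matrix (Fin n) (Fin d) ℝ) :
    frobNorm A ^ 2 = ∑ i, ∑ j, (A i j) ^ 2 :=
  Real.sq_sqrt (Finset.sum_nonneg fun _ _ => Finset.sum_nonneg fun _ _ => sq_nonneg _)

lemma vecNorm_mulVec_le {n m : ℕ} (A : Matrix (Fin n) (Fin m) ℝ) (x : Fin m → ℝ) :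
    vecNorm (A.mulVec x) ≤ matOpNorm A * vecNorm x := by
  rw [vecNorm_eq, vecNorm_eq, matOpNorm_eq]
  exact A.l2_opNorm_mulVec ((WithLp.equiv 2 _).symm x)

lemma frobNorm_eq_norm {n d : ℕ} (A : Matrix (Fin n) (Fin d) ℝ) :
    frobNorm A = ‖(WithLp.equiv 2 ((Fin n × Fin d) → ℝ)).symm (fun p => A p.1 p.2)‖ := by
  rw [frobNorm, EuclideanSpace.norm_eq]
  simp [sq_abs, Fintype.sum_prod_type]

lemma frobNorm_add_le {n d : ℕ} (A B : Matrix (Fin n) (Fin d) ℝ) :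
    frobNorm (A + B) ≤ frobNorm A + frobNorm B := by
  rw [frobNorm_eq_norm, frobNorm_eq_norm, frobNorm_eq_norm]
  exact norm_add_le ((WithLp.equiv 2 ((Fin n × Fin d) → ℝ)).symm (fun p => A p.1 p.2))
    ((WithLp.equiv 2 ((Fin n × Fin d) → ℝ)).symm (fun p => B p.1 p.2))

lemma frobNorm_transpose {n d : ℕ} (A : Matrix (Fin n) (Fin d) ℝ) :
    frobNorm Aᵀ = frobNorm A := by
  rw [frobNorm, frobNorm, Finset.sum_comm]
  rfl

lemma matOpNorm_transpose {n d : ℕ} (A : Matrix (Fin n) (Fin d) ℝ) :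
    matOpNorm Aᵀ = matOpNorm A := by
  have h : Aᵀ = Aᴴ := by ext i j; simp [Matrix.conjTranspose_apply]
  rw [matOpNorm_eq, matOpNorm_eq, h, Matrix.l2_opNorm_conjTranspose]

/-- Frobenius norm of a product, bounded by op-norm of the left factor. -/
lemma frobNorm_mul_le_left {m n d : ℕ} (A : Matrix (Fin m) (Fin n) ℝ)
    (B : Matrix (Fin n) (Fin d) ℝ) :
    frobNorm (A * B) ≤ matOpNorm A * frobNorm B := by
  have key : ∀ j, ∑ i, ((A * B) i j) ^ 2 ≤ matOpNorm A ^ 2 * ∑ i, (B i j) ^ 2 := by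
    intro j
    have hcol : (fun i => (A * B) i j) = A.mulVec (fun i => B i j) := by
      ext i; simp [Matrix.mul_apply, Matrix.mulVec, dotProduct]
    have h1 : vecNorm (A.mulVec (fun i => B i j)) ≤
        matOpNorm A * vecNorm (fun i => B i j) := vecNorm_mulVec_le _ _
    have h2 := pow_le_pow_left₀ (vecNorm_nonneg _) h1 2
    rw [vecNorm_sq, mul_pow, vecNorm_sq] at h2
    calc ∑ i, ((A * B) i j) ^ 2 = ∑ i, (A.mulVec (fun i => B i j) i) ^ 2 :=
          Finset.sum_congr rfl fun i _ => by rw [congrFun hcol i]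
      _ ≤ _ := h2
  have hsum : ∑ j, ∑ i, ((A * B) i j) ^ 2 ≤ matOpNorm A ^ 2 * ∑ j, ∑ i, (B i j) ^ 2 := by
    rw [Finset.mul_sum]
    exact Finset.sum_le_sum fun j _ => key j
  have := Real.sqrt_le_sqrt hsum
  rw [Real.sqrt_mul (sq_nonneg _), Real.sqrt_sq (matOpNorm_nonneg A)] at this
  calc frobNorm (A * B) = Real.sqrt (∑ j, ∑ i, ((A * B) i j) ^ 2) := by
        rw [frobNorm, Finset.sum_comm]
    _ ≤ matOpNorm A * Real.sqrt (∑ j, ∑ i, (B i j) ^ 2) := this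
    _ = matOpNorm A * frobNorm B := by rw [frobNorm, Finset.sum_comm]

/-- Frobenius norm of a product, bounded by op-norm of the right factor. -/
lemma frobNorm_mul_le_right {m n d : ℕ} (B : Matrix (Fin m) (Fin n) ℝ)
    (W : Matrix (Fin n) (Fin d) ℝ) :
    frobNorm (B * W) ≤ frobNorm B * matOpNorm W := by
  have h := frobNorm_mul_le_left Wᵀ Bᵀ
  rw [← Matrix.transpose_mul, frobNorm_transpose, frobNorm_transpose, matOpNorm_transpose] at h
  linarith

/-- Entrywise Lipschitz maps contract Frobenius norm of differences. -/
lemma frobNorm_map_sub_le {n d : ℕ} (σ : ℝ → ℝ) (τσ : ℝ) (hτσ : 0 ≤ τσ)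
    (hσ : ∀ x y : ℝ, |σ x - σ y| ≤ τσ * |x - y|)
    (X Y : Matrix (Fin n) (Fin d) ℝ) :
    frobNorm (X.map σ - Y.map σ) ≤ τσ * frobNorm (X - Y) := by
  have h : ∑ i, ∑ j, ((X.map σ - Y.map σ) i j) ^ 2 ≤
      τσ ^ 2 * ∑ i, ∑ j, ((X - Y) i j) ^ 2 := by
    rw [Finset.mul_sum]
    refine Finset.sum_le_sum fun i _ => ?_
    rw [Finset.mul_sum]
    refine Finset.sum_le_sum fun j _ => ?_
    have h1 : |σ (X i j) - σ (Y i j)| ≤ τσ * |X i j - Y i j| := hσ _ _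
    have h2 := pow_le_pow_left₀ (abs_nonneg _) h1 2
    rw [sq_abs, mul_pow, sq_abs] at h2
    simpa [Matrix.sub_apply, Matrix.map_apply] using h2
  have := Real.sqrt_le_sqrt h
  rwa [Real.sqrt_mul (sq_nonneg _), Real.sqrt_sq hτσ] at this

lemma meanPool_sub {n d : ℕ} (H G : Matrix (Fin n) (Fin d) ℝ) :
    meanPool H - meanPool G = meanPool (H - G) := by
  funext c
  simp [meanPool, Finset.sum_sub_distrib, mul_sub]

lemma vecNorm_meanPool_le {n d : ℕ} (D : Matrix (Fin n) (Fin d) ℝ) :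
    vecNorm (meanPool D) ≤ frobNorm D := by
  rcases Nat.eq_zero_or_pos n with hn | hn
  · subst hn
    have : vecNorm (meanPool D) = 0 := by
      simp [vecNorm, meanPool]
    rw [this]; exact frobNorm_nonneg D
  · have key : ∀ c, (meanPool D c) ^ 2 ≤ ∑ v, (D v c) ^ 2 := by
      intro c
      have hcs : (∑ v, D v c) ^ 2 ≤ (n : ℝ) * ∑ v, (D v c) ^ 2 := by
        have := sq_sum_le_card_mul_sum_sq (s := (Finset.univ : Finset (Fin n)))
          (f := fun v => D v c)
        simpa using this
      have hn' : (0 : ℝ) < n := by exact_mod_cast hn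
      have : meanPool D c ^ 2 = (∑ v, D v c) ^ 2 / (n : ℝ) ^ 2 := by
        rw [meanPool]; field_simp
      rw [this]
      rw [div_le_iff₀ (by positivity)]
      calc (∑ v, D v c) ^ 2 ≤ (n : ℝ) * ∑ v, (D v c) ^ 2 := hcs
        _ ≤ ((∑ v, (D v c) ^ 2) * (n:ℝ)) * (n:ℝ) := by
            nlinarith [Finset.sum_nonneg (fun v (_ : v ∈ Finset.univ) => sq_nonneg (D v c)),
              (by exact_mod_cast hn : (1:ℝ) ≤ n)]
        _ = (∑ v, (D v c) ^ 2) * (n:ℝ)^2 := by ring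
      -- done
    have h : ∑ c, (meanPool D c) ^ 2 ≤ ∑ c, ∑ v, (D v c) ^ 2 :=
      Finset.sum_le_sum fun c _ => key c
    have := Real.sqrt_le_sqrt h
    rw [vecNorm]
    calc Real.sqrt (∑ c, (meanPool D c) ^ 2) ≤ Real.sqrt (∑ c, ∑ v, (D v c) ^ 2) := this
      _ = frobNorm D := by rw [frobNorm, Finset.sum_comm]

end GCNAux

/-- Theorem 1 of the paper: for two `K`-layer GCNs with 1-hop filters `Ψ(L) = I − L`,
shared weights and all-ones initial attributes, the mean-pooled center-node
representations satisfy `‖H_i^role − H_j^role‖₂ ≤ τ · ‖L_i − L_j‖₂`, where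
`τ = ((b^K − 1)/(b − 1)) · τ_σ τ_w τ_h` and `b = τ_σ τ_w τ_l`. -/
theorem local_structure_similarity {n d K : ℕ} (hK : 1 ≤ K)
    (σ : ℝ → ℝ) (τσ : ℝ) (hτσ : 0 ≤ τσ)
    (hσ : ∀ x y : ℝ, |σ x - σ y| ≤ τσ * |x - y|)
    (Li Lj : Matrix (Fin n) (Fin n) ℝ) (W : Fin K → Matrix (Fin d) (Fin d) ℝ)
    (Hi Hj : ℕ → Matrix (Fin n) (Fin d) ℝ)
    (hHi0 : Hi 0 = Matrix.of fun _ _ => (1 : ℝ))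
    (hHj0 : Hj 0 = Matrix.of fun _ _ => (1 : ℝ))
    (hHi : ∀ l : Fin K, Hi (l + 1) = (((1 - Li) * Hi l) * W l).map σ)
    (hHj : ∀ l : Fin K, Hj (l + 1) = (((1 - Lj) * Hj l) * W l).map σ)
    (τw τh τl : ℝ) (hτw : 0 ≤ τw) (hτh : 0 ≤ τh) (hτl : 0 ≤ τl)
    (hW : ∀ l : Fin K, matOpNorm (W l) ≤ τw)
    (hH : ∀ l : ℕ, l ≤ K - 1 → frobNorm (Hi l) ≤ τh)
    (hΨj : matOpNorm (1 - Lj) ≤ τl)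
    (hb : τσ * τw * τl ≠ 1) :
    vecNorm (meanPool (Hi K) - meanPool (Hj K)) ≤
      ((((τσ * τw * τl) ^ K - 1) / (τσ * τw * τl - 1)) * (τσ * τw * τh)) *
        matOpNorm (Li - Lj) := by
  open GCNAux in
  set δ := matOpNorm (Li - Lj) with hδdef
  have hδ : 0 ≤ δ := matOpNorm_nonneg _
  have hδ' : matOpNorm (Lj - Li) = δ := by
    rw [hδdef, matOpNorm_eq, matOpNorm_eq, norm_sub_rev]
  have claim : ∀ l : ℕ, l ≤ K →
      frobNorm (Hi l - Hj l) ≤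
        (∑ t ∈ Finset.range l, (τσ * τw * τl) ^ t) * (τσ * τw * τh * δ) := by
    intro l
    induction l with
    | zero =>
        intro _
        rw [hHi0, hHj0, sub_self]
        simp [frobNorm]
    | succ l ih =>
        intro hl
        have hlt : l < K := hl
        have ihl := ih (Nat.le_of_lt hlt)
        have hEnn : 0 ≤ frobNorm (Hi l - Hj l) := frobNorm_nonneg _
        have ei := hHi ⟨l, hlt⟩
        have ej := hHj ⟨l, hlt⟩
        simp only [Fin.val_mk] at ei ej
        rw [ei, ej]
        set X := ((1 - Li) * Hi l) * W ⟨l, hlt⟩ with hX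
        set Y := ((1 - Lj) * Hj l) * W ⟨l, hlt⟩ with hY
        have h1 : frobNorm (X.map σ - Y.map σ) ≤ τσ * frobNorm (X - Y) :=
          frobNorm_map_sub_le σ τσ hτσ hσ X Y
        have hXY : X - Y =
            ((Lj - Li) * Hi l + (1 - Lj) * (Hi l - Hj l)) * W ⟨l, hlt⟩ := by
          rw [hX, hY]
          simp only [Matrix.sub_mul, Matrix.mul_sub, Matrix.add_mul, Matrix.one_mul]
          abel
        have hA : frobNorm ((Lj - Li) * Hi l) ≤ δ * τh := by
          refine (frobNorm_mul_le_left _ _).trans ?_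
          rw [hδ']
          exact mul_le_mul_of_nonneg_left (hH l (by omega)) hδ
        have hB : frobNorm ((1 - Lj) * (Hi l - Hj l)) ≤ τl * frobNorm (Hi l - Hj l) := by
          refine (frobNorm_mul_le_left _ _).trans ?_
          exact mul_le_mul_of_nonneg_right hΨj hEnn
        have h2 : frobNorm (X - Y) ≤ (δ * τh + τl * frobNorm (Hi l - Hj l)) * τw := by
          rw [hXY]
          refine (frobNorm_mul_le_right _ _).trans ?_
          refine mul_le_mul ((frobNorm_add_le _ _).trans (add_le_add hA hB))
            (hW ⟨l, hlt⟩) (matOpNorm_nonneg _) ?_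
          exact add_nonneg (mul_nonneg hδ hτh) (mul_nonneg hτl hEnn)
        have h3 : frobNorm (X.map σ - Y.map σ) ≤
            τσ * ((δ * τh + τl * frobNorm (Hi l - Hj l)) * τw) :=
          h1.trans (mul_le_mul_of_nonneg_left h2 hτσ)
        have h4 : τσ * ((δ * τh + τl * frobNorm (Hi l - Hj l)) * τw) ≤
            τσ * ((δ * τh + τl * ((∑ t ∈ Finset.range l, (τσ * τw * τl) ^ t) *
              (τσ * τw * τh * δ))) * τw) := by
          have := mul_le_mul_of_nonneg_left ihl hτl
          nlinarith [mul_nonneg hτσ hτw]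
        refine (h3.trans h4).trans (le_of_eq ?_)
        rw [geom_sum_succ]
        ring
  have hfinal := claim K le_rfl
  have hpool : vecNorm (meanPool (Hi K) - meanPool (Hj K)) ≤ frobNorm (Hi K - Hj K) := by
    rw [meanPool_sub]
    exact vecNorm_meanPool_le _
  calc vecNorm (meanPool (Hi K) - meanPool (Hj K))
      ≤ (∑ t ∈ Finset.range K, (τσ * τw * τl) ^ t) * (τσ * τw * τh * δ) :=
        hpool.trans hfinal
    _ = ((((τσ * τw * τl) ^ K - 1) / (τσ * τw * τl - 1)) * (τσ * τw * τh)) * δ := by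
        rw [geom_sum_eq hb]; ring
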